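/- Over a field k of characteristic zero, the monoid algebra kR_n of the rook monoid is isomorphic as a k-algebra to the direct sum over r from 0 to n of the matrix algebras M_{C(n,r)}(kS_r), where the r-th summand consists of C(n,r)×C(n,r) matrices with entries in the group algebra kS_r. In particular kR_n is a split semisimple k-algebra. -/

import Mathlib

/-- The rook monoid `R_n`: partial injective maps from `Fin n` to itself,
modelled as functions `Fin n → Option (Fin n)` that are injective on their domain. -/
def RookFun (n : ℕ) : Type :=
  {f : Fin n → Option (Fin n) // ∀ i j a, f i = some a → f j = some a → i = j}

namespace RookFun

variable {n : ℕ}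

instance : Fintype (RookFun n) :=
  inferInstanceAs (Fintype {f : Fin n → Option (Fin n) //
    ∀ i j a, f i = some a → f j = some a → i = j})

instance : DecidableEq (RookFun n) :=
  inferInstanceAs (DecidableEq {f : Fin n → Option (Fin n) //
    ∀ i j a, f i = some a → f j = some a → i = j})

/-- Composition of partial maps: `(σ * τ) i = σ (τ i)` (first `τ`, then `σ`). -/
instance : Mul (RookFun n) :=
  ⟨fun σ τ => ⟨fun i => (τ.1 i).bind σ.1, by
    intro i j a hi hj
    rcases Option.bind_eq_some_iff.mp hi with ⟨b, hb, hb'⟩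
    rcases Option.bind_eq_some_iff.mp hj with ⟨c, hc, hc'⟩
    have hbc : b = c := σ.2 _ _ _ hb' hc'
    subst hbc
    exact τ.2 _ _ _ hb hc⟩⟩

instance : One (RookFun n) :=
  ⟨⟨some, fun i j a hi hj => by
    rw [Option.some.inj hi, Option.some.inj hj]⟩⟩

instance : Monoid (RookFun n) where
  mul_assoc a b c := Subtype.ext (funext fun i => by
    show (c.1 i).bind (fun x => (b.1 x).bind a.1) = ((c.1 i).bind b.1).bind a.1
    cases c.1 i <;> rfl)
  one_mul a := Subtype.ext (funext fun i => by
    show (a.1 i).bind some = a.1 i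
    cases a.1 i <;> rfl)
  mul_one a := Subtype.ext (funext fun i => by
    show (some i).bind a.1 = a.1 i
    rfl)

/-- The domain of a partial map. -/
def dom (σ : RookFun n) : Finset (Fin n) :=
  Finset.univ.filter fun i => (σ.1 i).isSome

/-- The range of a partial map. -/
def ran (σ : RookFun n) : Finset (Fin n) :=
  Finset.univ.filter fun j => ∃ i, σ.1 i = some j

/-- The partial identity `ε_X` on a subset `X`. -/
def eps (X : Finset (Fin n)) : RookFun n :=
  ⟨fun i => if i ∈ X then some i else none, by
    intro i j a hi hj
    by_cases h1 : i ∈ X <;> by_cases h2 : j ∈ X <;>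
      simp [h1, h2] at hi hj
    exact hi.trans hj.symm⟩

end RookFun

/-! The `(I, J)` entry of `φ(σ)` is `p(σ ε_J)` if `σ` maps `J ⊆ dom σ` onto `I`, and `0` otherwise.
`φ` is multiplicative because `στ` maps `K` onto `I` exactly when `τ` maps `K` onto `J = τ(K)` and
`σ` maps `J` onto `I`, and then the permutations `ι_I⁻¹ ∘ σ ∘ ι_J` compose. `φ` is injective by a
leading-term argument: if `σ₀` has a domain of maximal size among the basis elements occurring in
`x ≠ 0`, then in the `(σ₀(dom σ₀), dom σ₀)` entry of `φ(x)` only `σ₀` contributes to the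
coefficient of `p(σ₀)`. A partial bijection is recovered from its domain `J`, its image `I` and
`ι_I⁻¹ ∘ σ ∘ ι_J`, so both sides have dimension `∑_r C(n,r)² r!` and `φ` is an isomorphism.
Semisimplicity transfers from the product of matrix algebras over the group algebras `k S_r`,
which are semisimple by Maschke's theorem. -/

namespace RookFun

variable {n : ℕ}

lemma mul_apply (σ τ : RookFun n) (i : Fin n) : (σ * τ).1 i = (τ.1 i).bind σ.1 := rfl

lemma one_apply (i : Fin n) : (1 : RookFun n).1 i = some i := rfl

lemma mem_dom {σ : RookFun n} {i : Fin n} : i ∈ dom σ ↔ (σ.1 i).isSome := by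
  simp [dom]

def img (σ : RookFun n) (J : Finset (Fin n)) : Finset (Fin n) :=
  J.biUnion fun j => (σ.1 j).toFinset

lemma mem_img {σ : RookFun n} {J : Finset (Fin n)} {a : Fin n} :
    a ∈ img σ J ↔ ∃ j ∈ J, σ.1 j = some a := by
  simp [img, Option.mem_def]

lemma card_img {σ : RookFun n} {J : Finset (Fin n)} (h : J ⊆ dom σ) :
    (img σ J).card = J.card := by
  rw [img, Finset.card_biUnion fun x _ y _ hxy => Finset.disjoint_left.2 fun a ha ha' =>
    hxy (σ.2 _ _ a (by simpa using ha) (by simpa using ha'))]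
  refine (Finset.sum_congr rfl fun j hj => ?_).trans (Finset.card_eq_sum_ones J).symm
  obtain ⟨a, ha⟩ := Option.isSome_iff_exists.mp (mem_dom.mp (h hj))
  simp [ha]

lemma img_mul (σ τ : RookFun n) (K : Finset (Fin n)) : img (σ * τ) K = img σ (img τ K) := by
  ext a
  simp only [mem_img, mul_apply, Option.bind_eq_some_iff]
  grind

lemma subset_dom_mul_iff {σ τ : RookFun n} {K : Finset (Fin n)} :
    K ⊆ dom (σ * τ) ↔ K ⊆ dom τ ∧ img τ K ⊆ dom σ := by
  simp only [Finset.subset_iff, mem_img, mem_dom, mul_apply, Option.isSome_iff_exists,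
    Option.bind_eq_some_iff]
  constructor
  · intro h
    refine ⟨fun i hi => ?_, fun a ⟨i, hi, hia⟩ => ?_⟩
    · obtain ⟨-, b, hb, -⟩ := h hi
      exact ⟨b, hb⟩
    · obtain ⟨c, b, hb, hbc⟩ := h hi
      exact ⟨c, Option.some_injective _ (hia.symm.trans hb) ▸ hbc⟩
  · rintro ⟨hτ, hσ⟩ i hi
    obtain ⟨b, hb⟩ := hτ hi
    obtain ⟨c, hc⟩ := hσ ⟨i, hi, hb⟩
    exact ⟨c, b, hb, hc⟩

def BijOn (σ : RookFun n) (J I : Finset (Fin n)) : Prop :=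
  J ⊆ dom σ ∧ img σ J = I

instance (σ : RookFun n) (J I : Finset (Fin n)) : Decidable (σ.BijOn J I) :=
  inferInstanceAs (Decidable (_ ∧ _))

lemma bijOn_one_iff {I J : Finset (Fin n)} : BijOn 1 J I ↔ J = I := by
  have : img 1 J = J := by ext; simp [mem_img, one_apply]
  simp [BijOn, this, dom, one_apply, eq_comm]

namespace BijOn

variable {σ τ : RookFun n} {I J K : Finset (Fin n)}

lemma card_eq (h : BijOn σ J I) : I.card = J.card := h.2 ▸ card_img h.1

lemma mul (hσ : BijOn σ J I) (hτ : BijOn τ K J) : BijOn (σ * τ) K I :=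
  ⟨subset_dom_mul_iff.2 ⟨hτ.1, hτ.2 ▸ hσ.1⟩, by rw [img_mul, hτ.2, hσ.2]⟩

lemma of_mul (h : BijOn (σ * τ) K I) : BijOn τ K (img τ K) ∧ BijOn σ (img τ K) I :=
  ⟨⟨(subset_dom_mul_iff.1 h.1).1, rfl⟩, (subset_dom_mul_iff.1 h.1).2, by rw [← img_mul, h.2]⟩

variable {r : ℕ}

/-- The permutation `ι_I⁻¹ ∘ σ ∘ ι_J` of `Fin r`, i.e. `p(σ ε_J)` in the paper's notation. -/
noncomputable def perm (h : BijOn σ J I) (hI : I.card = r) (hJ : J.card = r) :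
    Equiv.Perm (Fin r) :=
  have hget (x : Fin r) : (σ.1 (J.orderIsoOfFin hJ x)).isSome :=
    mem_dom.1 (h.1 (J.orderIsoOfFin hJ x).2)
  have hmem (x : Fin r) : (σ.1 (J.orderIsoOfFin hJ x)).get (hget x) ∈ I :=
    h.2 ▸ mem_img.2 ⟨_, (J.orderIsoOfFin hJ x).2, (Option.some_get _).symm⟩
  Equiv.ofBijective (fun x => (I.orderIsoOfFin hI).symm ⟨_, hmem x⟩) <|
    Finite.injective_iff_bijective.1 fun x y hxy => by
      have hval := congrArg Subtype.val ((I.orderIsoOfFin hI).symm.injective hxy)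
      simp only [Option.get_inj] at hval
      exact (J.orderIsoOfFin hJ).injective <| Subtype.ext <|
        σ.2 _ _ _ (Option.some_get (hget x)).symm
          (hval.symm.trans (Option.some_get (hget x)).symm)

lemma apply_orderIsoOfFin (h : BijOn σ J I) (hI : I.card = r) (hJ : J.card = r) (x : Fin r) :
    σ.1 (J.orderIsoOfFin hJ x) = some (I.orderIsoOfFin hI (h.perm hI hJ x) : Fin n) := by
  simp [perm]

lemma perm_eq (h : BijOn σ J I) (hI : I.card = r) (hJ : J.card = r) {π : Equiv.Perm (Fin r)}
    (hπ : ∀ x, σ.1 (J.orderIsoOfFin hJ x) = some (I.orderIsoOfFin hI (π x) : Fin n)) :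
    h.perm hI hJ = π := by
  ext x
  have := (h.apply_orderIsoOfFin hI hJ x).symm.trans (hπ x)
  simp only [Option.some_inj, SetLike.coe_eq_coe, EmbeddingLike.apply_eq_iff_eq] at this
  rw [this]

lemma perm_one (h : BijOn 1 J J) (hJ : J.card = r) : h.perm hJ hJ = 1 :=
  h.perm_eq hJ hJ fun _ => one_apply _

lemma perm_mul (hσ : BijOn σ J I) (hτ : BijOn τ K J) (hI : I.card = r) (hJ : J.card = r)
    (hK : K.card = r) : (hσ.mul hτ).perm hI hK = hσ.perm hI hJ * hτ.perm hJ hK :=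
  (hσ.mul hτ).perm_eq hI hK fun x => by
    rw [mul_apply, hτ.apply_orderIsoOfFin hJ hK, Option.bind_some, hσ.apply_orderIsoOfFin hI hJ,
      Equiv.Perm.mul_apply]

lemma eq_of_perm_eq (hσ : BijOn σ J I) (hτ : BijOn τ J I) (hσJ : dom σ = J) (hτJ : dom τ = J)
    (hI : I.card = r) (hJ : J.card = r) (h : hσ.perm hI hJ = hτ.perm hI hJ) : σ = τ := by
  refine Subtype.ext (funext fun i => ?_)
  by_cases hi : i ∈ J
  · obtain ⟨x, rfl⟩ : ∃ x, (J.orderIsoOfFin hJ x : Fin n) = i :=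
      ⟨(J.orderIsoOfFin hJ).symm ⟨i, hi⟩, by simp⟩
    rw [hσ.apply_orderIsoOfFin hI hJ, hτ.apply_orderIsoOfFin hI hJ, h]
  · have hnone {ρ : RookFun n} (hρ : dom ρ = J) : ρ.1 i = none :=
      Option.not_isSome_iff_eq_none.1 fun hs => hi (hρ ▸ mem_dom.2 hs)
    rw [hnone hσJ, hnone hτJ]

end BijOn

section ofPerm

variable {I J : Finset (Fin n)} {r : ℕ} (hI : I.card = r) (hJ : J.card = r)

def ofPerm (π : Equiv.Perm (Fin r)) : RookFun n :=
  ⟨fun i => if h : i ∈ J then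
      some (I.orderIsoOfFin hI (π ((J.orderIsoOfFin hJ).symm ⟨i, h⟩)) : Fin n) else none, by
    intro i j a hi hj
    dsimp only at hi hj
    split_ifs at hi hj
    simpa using (Option.some_inj.1 (hi.trans hj.symm))⟩

lemma ofPerm_apply_orderIsoOfFin (π : Equiv.Perm (Fin r)) (x : Fin r) :
    (ofPerm hI hJ π).1 (J.orderIsoOfFin hJ x) = some (I.orderIsoOfFin hI (π x) : Fin n) := by
  simp only [ofPerm, dif_pos (J.orderIsoOfFin hJ x).2, Subtype.coe_eta, OrderIso.symm_apply_apply]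

lemma dom_ofPerm (π : Equiv.Perm (Fin r)) : dom (ofPerm hI hJ π) = J := by
  ext i
  rw [mem_dom]
  by_cases hi : i ∈ J <;> simp [ofPerm, hi]

lemma bijOn_ofPerm (π : Equiv.Perm (Fin r)) : (ofPerm hI hJ π).BijOn J I := by
  refine ⟨(dom_ofPerm hI hJ π).ge, Finset.eq_of_subset_of_card_le (fun a ha => ?_) ?_⟩
  · obtain ⟨i, hi, hia⟩ := mem_img.1 ha
    simp only [ofPerm, dif_pos hi, Option.some_inj] at hia
    exact hia ▸ Finset.coe_mem _
  · rw [hI, card_img (dom_ofPerm hI hJ π).ge, hJ]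

end ofPerm

end RookFun

abbrev PermMatrixAlgebra (n : ℕ) (k : Type) [CommSemiring k] : Type :=
  Π r : Fin (n + 1),
    Matrix {X : Finset (Fin n) // X.card = r.val} {X : Finset (Fin n) // X.card = r.val}
      (MonoidAlgebra k (Equiv.Perm (Fin r.val)))

abbrev PermMatrixIndex (n : ℕ) : Type :=
  Σ r : Fin (n + 1), {X : Finset (Fin n) // X.card = r.val} ×
    {X : Finset (Fin n) // X.card = r.val} × Equiv.Perm (Fin r.val)

lemma finrank_permMatrixAlgebra (k : Type) [Field k] (n : ℕ) :
    Module.finrank k (PermMatrixAlgebra n k) = Fintype.card (PermMatrixIndex n) := by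
  simp only [Module.finrank_pi_fintype, Module.finrank_matrix,
    Module.finrank_eq_card_basis (MonoidAlgebra.basis _ k), Fintype.card_sigma, Fintype.card_prod,
    mul_assoc]

lemma finrank_monoidAlgebra (k G : Type) [Field k] [Fintype G] :
    Module.finrank k (MonoidAlgebra k G) = Fintype.card G :=
  Module.finrank_eq_card_basis (MonoidAlgebra.basis G k)

namespace RookFun

variable (k : Type) [CommSemiring k] {n : ℕ}

/-- `φ(σ) = ∑_{X ⊆ dom σ} p(σ ε_X) E_{σ(X), X}`. -/
noncomputable def phiMatrix (σ : RookFun n) : PermMatrixAlgebra n k :=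
  fun _ I J => if h : σ.BijOn J.1 I.1 then MonoidAlgebra.single (h.perm I.2 J.2) 1 else 0

variable {k} {σ τ : RookFun n} {r : Fin (n + 1)} {I J : {X : Finset (Fin n) // X.card = r.val}}

lemma phiMatrix_apply_of_bijOn (h : σ.BijOn J.1 I.1) :
    phiMatrix k σ r I J = MonoidAlgebra.single (h.perm I.2 J.2) 1 :=
  dif_pos h

lemma phiMatrix_apply_of_not_bijOn (h : ¬σ.BijOn J.1 I.1) : phiMatrix k σ r I J = 0 :=
  dif_neg h

variable (k)

lemma phiMatrix_one : phiMatrix k (1 : RookFun n) = 1 := by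
  ext r I J : 2
  by_cases h : J = I
  · subst h
    have h1 : BijOn 1 J.1 J.1 := bijOn_one_iff.2 rfl
    rw [phiMatrix_apply_of_bijOn h1, h1.perm_one, Pi.one_apply, Matrix.one_apply_eq]
    rfl
  · rw [phiMatrix_apply_of_not_bijOn (mt (fun h' => Subtype.ext (bijOn_one_iff.1 h')) h),
      Pi.one_apply, Matrix.one_apply_ne' h]

lemma phiMatrix_mul (σ τ : RookFun n) :
    phiMatrix k (σ * τ) = phiMatrix k σ * phiMatrix k τ := by
  ext r I K : 2
  rw [Pi.mul_apply, Matrix.mul_apply]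
  by_cases h : (σ * τ).BijOn K.1 I.1
  · obtain ⟨hτ, hσ⟩ := h.of_mul
    let J : {X : Finset (Fin n) // X.card = r.val} := ⟨img τ K.1, hτ.card_eq.trans K.2⟩
    rw [Finset.sum_eq_single J]
    · rw [phiMatrix_apply_of_bijOn h, phiMatrix_apply_of_bijOn (J := J) hσ,
        phiMatrix_apply_of_bijOn (I := J) hτ, MonoidAlgebra.single_mul_single, mul_one,
        hσ.perm_mul hτ]
    · intro J' _ hJ'
      rw [phiMatrix_apply_of_not_bijOn fun hτ' => hJ' (Subtype.ext hτ'.2.symm), mul_zero]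
    · exact fun hJ => absurd (Finset.mem_univ J) hJ
  · rw [phiMatrix_apply_of_not_bijOn h]
    refine (Finset.sum_eq_zero fun J _ => ?_).symm
    by_cases hτ : τ.BijOn K.1 J.1
    · rw [phiMatrix_apply_of_not_bijOn (σ := σ) fun hσ => h (hσ.mul hτ), zero_mul]
    · rw [phiMatrix_apply_of_not_bijOn hτ, mul_zero]

noncomputable def phi (n : ℕ) : MonoidAlgebra k (RookFun n) →ₐ[k] PermMatrixAlgebra n k :=
  MonoidAlgebra.lift k _ _
    { toFun := phiMatrix k
      map_one' := phiMatrix_one k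
      map_mul' := phiMatrix_mul k }

variable {k}

lemma coeff_phi_apply (x : MonoidAlgebra k (RookFun n)) (g : Equiv.Perm (Fin r)) :
    (phi k n x r I J).coeff g =
      ∑ σ ∈ x.coeff.support, x.coeff σ * (phiMatrix k σ r I J).coeff g := by
  rw [phi, MonoidAlgebra.lift_apply, Finsupp.sum, Finset.sum_apply, Matrix.sum_apply,
    MonoidAlgebra.coeff_sum, Finset.sum_apply']
  rfl

lemma coeff_phi_apply_perm (x : MonoidAlgebra k (RookFun n)) {σ₀ : RookFun n}
    (h₀ : σ₀.BijOn J.1 I.1) (hdom : dom σ₀ = J.1)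
    (hmax : ∀ σ ∈ x.coeff.support, (dom σ).card ≤ J.1.card) :
    (phi k n x r I J).coeff (h₀.perm I.2 J.2) = x.coeff σ₀ := by
  rw [coeff_phi_apply, Finset.sum_eq_single σ₀]
  · rw [phiMatrix_apply_of_bijOn h₀, MonoidAlgebra.coeff_single, Finsupp.single_eq_same, mul_one]
  · intro σ hσ hne
    by_cases h : σ.BijOn J.1 I.1
    · have hσJ : dom σ = J.1 := (Finset.eq_of_subset_of_card_le h.1 (hmax σ hσ)).symm
      rw [phiMatrix_apply_of_bijOn h, MonoidAlgebra.coeff_single,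
        Finsupp.single_eq_of_ne fun hp => hne (h.eq_of_perm_eq h₀ hσJ hdom I.2 J.2 hp.symm),
        mul_zero]
    · rw [phiMatrix_apply_of_not_bijOn h, MonoidAlgebra.coeff_zero, Finsupp.coe_zero,
        Pi.zero_apply, mul_zero]
  · intro h
    rw [Finsupp.notMem_support_iff.1 h, zero_mul]

lemma phi_injective (k : Type) [CommRing k] (n : ℕ) : Function.Injective (phi k n) := by
  rw [injective_iff_map_eq_zero]
  intro x hx
  by_contra hne
  obtain ⟨σ₀, hσ₀, hmax⟩ := x.coeff.support.exists_max_image (fun σ => (dom σ).card)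
    (Finsupp.support_nonempty_iff.2 (by rwa [Ne, MonoidAlgebra.coeff_eq_zero]))
  let r : Fin (n + 1) := ⟨(dom σ₀).card, Nat.lt_succ_of_le (card_finset_fin_le _)⟩
  let J : {X : Finset (Fin n) // X.card = r.val} := ⟨dom σ₀, rfl⟩
  let I : {X : Finset (Fin n) // X.card = r.val} := ⟨img σ₀ (dom σ₀), card_img subset_rfl⟩
  have h₀ : σ₀.BijOn J.1 I.1 := ⟨subset_rfl, rfl⟩
  refine Finsupp.mem_support_iff.1 hσ₀ ?_
  rw [← coeff_phi_apply_perm x h₀ rfl hmax, hx]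
  rfl

lemma card_permMatrixIndex_le (n : ℕ) :
    Fintype.card (PermMatrixIndex n) ≤ Fintype.card (RookFun n) := by
  refine Fintype.card_le_of_injective (fun p => ofPerm p.2.1.2 p.2.2.1.2 p.2.2.2) ?_
  rintro ⟨r, I, J, π⟩ ⟨r', I', J', π'⟩ h
  dsimp only at h
  have hJ : J.1 = J'.1 := by
    rw [← dom_ofPerm I.2 J.2 π, ← dom_ofPerm I'.2 J'.2 π', h]
  obtain rfl : r = r' := Fin.ext (by rw [← J.2, ← J'.2, hJ])
  obtain rfl : J = J' := Subtype.ext hJ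
  obtain rfl : I = I' := Subtype.ext <| by
    rw [← (bijOn_ofPerm I.2 J.2 π).2, ← (bijOn_ofPerm I'.2 J.2 π').2, h]
  obtain rfl : π = π' := Equiv.ext fun x => by
    have := (ofPerm_apply_orderIsoOfFin I.2 J.2 π x).symm.trans
      (h ▸ ofPerm_apply_orderIsoOfFin I.2 J.2 π' x)
    simpa using this
  rfl

lemma phi_bijective (k : Type) [Field k] (n : ℕ) : Function.Bijective (phi k n) := by
  have hinj := phi_injective k n
  have hdim : Module.finrank k (MonoidAlgebra k (RookFun n)) =
      Module.finrank k (PermMatrixAlgebra n k) :=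
    le_antisymm (LinearMap.finrank_le_finrank_of_injective (f := (phi k n).toLinearMap) hinj)
      (by rw [finrank_permMatrixAlgebra, finrank_monoidAlgebra]; exact card_permMatrixIndex_le n)
  exact ⟨hinj, (LinearMap.injective_iff_surjective_of_finrank_eq_finrank hdim
    (f := (phi k n).toLinearMap)).1 hinj⟩

end RookFun

open RookFun in
/-- over a field `k` of characteristic zero, the monoid algebra `k R_n` of the
rook monoid is isomorphic as a `k`-algebra to `⨁_{r=0}^n M_{C(n,r)}(k S_r)`, where the
`r`-th summand is the algebra of matrices with rows and columns indexed by the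
`r`-element subsets of `{1,…,n}` and entries in the group algebra `k S_r`; in particular
`k R_n` is a semisimple `k`-algebra. -/
theorem rookMonoidAlgebra_iso_matrixAlgebras (n : ℕ) (k : Type) [Field k] [CharZero k] :
    Nonempty (MonoidAlgebra k (RookFun n) ≃ₐ[k]
      Π r : Fin (n + 1),
        Matrix {X : Finset (Fin n) // X.card = r.val}
          {X : Finset (Fin n) // X.card = r.val}
          (MonoidAlgebra k (Equiv.Perm (Fin r.val)))) ∧
    IsSemisimpleRing (MonoidAlgebra k (RookFun n)) := by
  let e := AlgEquiv.ofBijective (phi k n) (phi_bijective k n)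
  exact ⟨⟨e⟩, e.symm.toRingEquiv.isSemisimpleRing⟩
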